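/- A collection S of dyadic intervals is η-sparse (i.e., one can choose pairwise disjoint measurable sets E_Q ⊆ Q with |E_Q| ≥ η|Q| for all Q ∈ S) if and only if it is (1/η)-Carleson (i.e., for every dyadic interval Q, the sum of |P| over P ∈ S with P ⊆ Q is at most (1/η)|Q|). -/

import Mathlib

open MeasureTheory Set
open scoped ENNReal

/-!
Sparse ⇒ Carleson: for `P ⊆ Q` the sets `E P` are disjoint subsets of `Q`, so
`η ∑ |P| ≤ ∑ |E P| ≤ |Q|`.

Carleson ⇒ sparse: let each `P ∈ S` demand `d P = η |P|`; the Carleson condition says that the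
demands of the intervals inside any `R` add up to at most `|R|`. Serve the intervals bottom-up,
`R` taking the leftmost portion of measure `d R` of `R` minus what its two children have claimed.
Since `S` may contain arbitrarily small intervals there is no bottom level, so the one-level step
is iterated from the empty assignment; taking leftmost portions is monotone, hence so are the
iterates, and their union `filled d R` still leaves at least `d R` of `R` to the part not claimed
through the children of `R`. That part is `E R`.
-/

/-- A dyadic interval `[n 2^k, (n+1) 2^k)` in `ℝ`. -/
structure DyadicInterval where
  k : ℤ
  n : ℤ

def DyadicInterval.toSet (I : DyadicInterval) : Set ℝ :=
  Set.Ico ((I.n : ℝ) * 2 ^ I.k) (((I.n : ℝ) + 1) * 2 ^ I.k)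

/-- `S` is an `η`-sparse collection of dyadic intervals: one can choose pairwise
disjoint measurable sets `E Q ⊆ Q` with `|E Q| ≥ η |Q|` for all `Q ∈ S`. -/
def IsSparse (η : ℝ) (S : Set DyadicInterval) : Prop :=
  ∃ E : DyadicInterval → Set ℝ,
    (∀ Q ∈ S, MeasurableSet (E Q) ∧ E Q ⊆ Q.toSet ∧
      ENNReal.ofReal η * volume Q.toSet ≤ volume (E Q)) ∧
    S.Pairwise fun Q Q' => Disjoint (E Q) (E Q')

/-- `S` is a `Λ`-Carleson collection of dyadic intervals: for every dyadic `Q`,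
the sum of `|P|` over `P ∈ S` with `P ⊆ Q` is at most `Λ |Q|`. -/
def IsCarleson (Λ : ℝ) (S : Set DyadicInterval) : Prop :=
  ∀ Q : DyadicInterval,
    (∑' P : {P : DyadicInterval // P ∈ S ∧ P.toSet ⊆ Q.toSet}, volume P.1.toSet)
      ≤ ENNReal.ofReal Λ * volume Q.toSet

namespace DyadicInterval

instance : Countable DyadicInterval :=
  (show Function.Injective fun I : DyadicInterval => (I.k, I.n) by
    rintro ⟨⟩ ⟨⟩ h; simpa using h).countable

theorem mem_toSet {I : DyadicInterval} {x : ℝ} : x ∈ I.toSet ↔ ⌊x / 2 ^ I.k⌋ = I.n := by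
  have h := zpow_pos (two_pos : (0 : ℝ) < 2) I.k
  rw [Int.floor_eq_iff, toSet, mem_Ico, le_div_iff₀ h, div_lt_iff₀ h]

theorem floor_div_two_zpow_add (x : ℝ) (k : ℤ) (j : ℕ) :
    ⌊x / 2 ^ (k + j)⌋ = ⌊x / 2 ^ k⌋ / 2 ^ j := by
  rw [zpow_add₀ two_ne_zero, zpow_natCast, ← div_div]
  exact_mod_cast Int.floor_div_natCast (x / 2 ^ k) (2 ^ j)

theorem nonempty_toSet (I : DyadicInterval) : I.toSet.Nonempty :=
  ⟨I.n * 2 ^ I.k, mem_toSet.2 <| by simp [zpow_ne_zero]⟩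

theorem volume_toSet (I : DyadicInterval) : volume I.toSet = ENNReal.ofReal (2 ^ I.k) := by
  rw [toSet, Real.volume_Ico]; ring_nf

theorem volume_toSet_ne_top (I : DyadicInterval) : volume I.toSet ≠ ∞ := by
  simp [volume_toSet]

theorem measurableSet_toSet (I : DyadicInterval) : MeasurableSet I.toSet := measurableSet_Ico

theorem bddBelow_toSet (I : DyadicInterval) : BddBelow I.toSet := bddBelow_Ico

theorem k_le_of_subset {P R : DyadicInterval} (h : P.toSet ⊆ R.toSet) : P.k ≤ R.k := by
  have := measure_mono (μ := volume) h
  rwa [volume_toSet, volume_toSet, ENNReal.ofReal_le_ofReal_iff (by positivity),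
    zpow_le_zpow_iff_right₀ one_lt_two] at this

theorem eq_of_subset_of_k_eq {P R : DyadicInterval} (h : P.toSet ⊆ R.toSet) (hk : P.k = R.k) :
    P = R := by
  obtain ⟨x, hx⟩ := P.nonempty_toSet
  have hxR := mem_toSet.1 (h hx)
  rw [mem_toSet, hk, hxR] at hx
  cases P; cases R; simp_all

theorem subset_or_disjoint_of_k_le {P R : DyadicInterval} (hk : P.k ≤ R.k) :
    P.toSet ⊆ R.toSet ∨ Disjoint P.toSet R.toSet := by
  obtain ⟨j, hj⟩ := Int.eq_ofNat_of_zero_le (sub_nonneg.2 hk)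
  have hfloor : ∀ x ∈ P.toSet, ⌊x / 2 ^ R.k⌋ = P.n / 2 ^ j := fun x hx => by
    rw [show R.k = P.k + j by omega, floor_div_two_zpow_add, mem_toSet.1 hx]
  by_cases hn : P.n / 2 ^ j = R.n
  · exact .inl fun x hx => mem_toSet.2 (by rw [hfloor x hx, hn])
  · exact .inr <| disjoint_left.2 fun x hxP hxR => hn (by rw [← hfloor x hxP, mem_toSet.1 hxR])

theorem subset_or_subset_or_disjoint (P R : DyadicInterval) :
    P.toSet ⊆ R.toSet ∨ R.toSet ⊆ P.toSet ∨ Disjoint P.toSet R.toSet := by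
  rcases le_total P.k R.k with hk | hk
  · exact (subset_or_disjoint_of_k_le hk).imp_right .inr
  · exact .inr ((subset_or_disjoint_of_k_le hk).imp_right fun h => h.symm)

def left (I : DyadicInterval) : DyadicInterval := ⟨I.k - 1, 2 * I.n⟩

def right (I : DyadicInterval) : DyadicInterval := ⟨I.k - 1, 2 * I.n + 1⟩

theorem mem_toSet_iff_mem_left_or_mem_right {I : DyadicInterval} {x : ℝ} :
    x ∈ I.toSet ↔ x ∈ I.left.toSet ∨ x ∈ I.right.toSet := by
  have h := floor_div_two_zpow_add x (I.k - 1) 1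
  simp only [sub_add_cancel, Nat.cast_one, pow_one] at h
  simp only [mem_toSet, left, right, h]
  omega

theorem left_subset (I : DyadicInterval) : I.left.toSet ⊆ I.toSet :=
  fun _ hx => mem_toSet_iff_mem_left_or_mem_right.2 (.inl hx)

theorem right_subset (I : DyadicInterval) : I.right.toSet ⊆ I.toSet :=
  fun _ hx => mem_toSet_iff_mem_left_or_mem_right.2 (.inr hx)

theorem disjoint_left_right (I : DyadicInterval) : Disjoint I.left.toSet I.right.toSet :=
  disjoint_left.2 fun x hl hr => by
    rw [mem_toSet] at hl hr
    simp only [left, right] at hl hr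
    omega

theorem not_subset_left (I : DyadicInterval) : ¬ I.toSet ⊆ I.left.toSet := fun h => by
  have := k_le_of_subset h; simp only [left] at this; omega

theorem not_subset_right (I : DyadicInterval) : ¬ I.toSet ⊆ I.right.toSet := fun h => by
  have := k_le_of_subset h; simp only [right] at this; omega

theorem subset_left_or_subset_right {P R : DyadicInterval} (h : P.toSet ⊆ R.toSet) (hne : P ≠ R) :
    P.toSet ⊆ R.left.toSet ∨ P.toSet ⊆ R.right.toSet := by
  have hk : P.k ≤ R.left.k := by
    have := k_le_of_subset h
    have := mt (eq_of_subset_of_k_eq h) hne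
    simp only [left]; omega
  refine (subset_or_disjoint_of_k_le hk).imp_right fun hdisj x hx => ?_
  exact (mem_toSet_iff_mem_left_or_mem_right.1 (h hx)).resolve_left (disjoint_left.1 hdisj hx)

end DyadicInterval

def leftmostPart (A : Set ℝ) (c : ℝ≥0∞) : Set ℝ :=
  A ∩ {y | volume (A ∩ Iic y) < c}

theorem leftmostPart_subset (A : Set ℝ) (c : ℝ≥0∞) : leftmostPart A c ⊆ A := inter_subset_left

theorem measurableSet_leftmostPart {A : Set ℝ} (hA : MeasurableSet A) (c : ℝ≥0∞) :
    MeasurableSet (leftmostPart A c) :=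
  have hmono : Monotone fun y => volume (A ∩ Iic y) := fun _ _ h =>
    measure_mono (inter_subset_inter_right _ (Iic_subset_Iic.2 h))
  hA.inter (hmono.measurable measurableSet_Iio)

theorem volume_inter_Iic_le_add (A : Set ℝ) (a b : ℝ) :
    volume (A ∩ Iic b) ≤ volume (A ∩ Iic a) + ENNReal.ofReal (b - a) := by
  calc volume (A ∩ Iic b) ≤ volume ((A ∩ Iic a) ∪ Ioc a b) := by
        refine measure_mono fun x hx => ?_
        rcases le_or_gt x a with hxa | hxa
        · exact .inl ⟨hx.1, hxa⟩
        · exact .inr ⟨hxa, hx.2⟩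
    _ ≤ _ := by rw [← Real.volume_Ioc]; exact measure_union_le _ _

theorem volume_leftmostPart_le (A : Set ℝ) (c : ℝ≥0∞) : volume (leftmostPart A c) ≤ c := by
  set B := leftmostPart A c
  have htrunc : ∀ t, volume (B ∩ Iic t) ≤ c := fun t => by
    rcases (B ∩ Iic t).eq_empty_or_nonempty with hempty | hne
    · simp [hempty]
    have hbdd : BddAbove (B ∩ Iic t) := ⟨t, fun _ hx => hx.2⟩
    set s := sSup (B ∩ Iic t)
    refine ENNReal.le_of_forall_pos_le_add fun ε hε _ => ?_
    obtain ⟨y, hy, hys⟩ := exists_lt_of_lt_csSup hne (sub_lt_self s (NNReal.coe_pos.2 hε))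
    calc volume (B ∩ Iic t) ≤ volume (A ∩ Iic s) :=
          measure_mono fun x hx => ⟨hx.1.1, le_csSup hbdd hx⟩
      _ ≤ volume (A ∩ Iic y) + ENNReal.ofReal (s - y) := volume_inter_Iic_le_add A y s
      _ ≤ c + ε := by
          gcongr
          · exact hy.1.2.le
          · exact (ENNReal.ofReal_le_ofReal (by linarith)).trans_eq ENNReal.ofReal_coe_nnreal
  have hB : B = ⋃ t : ℝ, B ∩ Iic t := by rw [← inter_iUnion, iUnion_Iic, inter_univ]
  rw [hB, Monotone.measure_iUnion fun s t h => inter_subset_inter_right _ (Iic_subset_Iic.2 h)]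
  exact iSup_le htrunc

theorem le_volume_leftmostPart {A : Set ℝ} (hA : BddBelow A) {c : ℝ≥0∞} (hc : c ≤ volume A) :
    c ≤ volume (leftmostPart A c) := by
  set G := {y ∈ A | c ≤ volume (A ∩ Iic y)}
  rcases G.eq_empty_or_nonempty with hG | hG
  · have : leftmostPart A c = A := inter_eq_left.2 fun y hy =>
      not_le.1 fun h => (eq_empty_iff_forall_notMem.1 hG) y ⟨hy, h⟩
    rwa [this]
  have hGbdd : BddBelow G := hA.mono (sep_subset _ _)
  set m := sInf G
  have hm : c ≤ volume (A ∩ Iic m) := by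
    refine ENNReal.le_of_forall_pos_le_add fun ε hε _ => ?_
    obtain ⟨g, hg, hgm⟩ := exists_lt_of_csInf_lt hG (lt_add_of_pos_right m (NNReal.coe_pos.2 hε))
    calc c ≤ volume (A ∩ Iic g) := hg.2
      _ ≤ volume (A ∩ Iic m) + ENNReal.ofReal (g - m) := volume_inter_Iic_le_add A m g
      _ ≤ volume (A ∩ Iic m) + ε := by
          gcongr
          exact (ENNReal.ofReal_le_ofReal (by linarith)).trans_eq ENNReal.ofReal_coe_nnreal
  calc c ≤ volume (A ∩ Iic m) := hm
    _ = volume (A ∩ Iio m) := measure_congr (ae_eq_refl A |>.inter Iio_ae_eq_Iic).symm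
    _ ≤ volume (leftmostPart A c) := measure_mono fun y hy =>
        ⟨hy.1, not_le.1 fun h => (csInf_le hGbdd ⟨hy.1, h⟩).not_gt hy.2⟩

theorem union_leftmostPart_subset {R X Y : Set ℝ} (h : X ⊆ Y) (c : ℝ≥0∞) :
    X ∪ leftmostPart (R \ X) c ⊆ Y ∪ leftmostPart (R \ Y) c := by
  rintro y (hy | ⟨hyR, hyc⟩)
  · exact .inl (h hy)
  by_cases hyY : y ∈ Y
  · exact .inl hyY
  · exact .inr ⟨⟨hyR.1, hyY⟩, lt_of_le_of_lt
      (measure_mono (inter_subset_inter_left _ (sdiff_subset_sdiff_right h))) hyc⟩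

namespace DyadicInterval

variable (d : DyadicInterval → ℝ≥0∞)

noncomputable def demandBelow (R : DyadicInterval) : ℝ≥0∞ :=
  ∑' P : {P : DyadicInterval // P.toSet ⊆ R.toSet}, d P

theorem demandBelow_left_add_right_add_le (R : DyadicInterval) :
    demandBelow d R.left + demandBelow d R.right + d R ≤ demandBelow d R := by
  let below : DyadicInterval → Set DyadicInterval := fun I => {P | P.toSet ⊆ I.toSet}
  have hlr : Disjoint (below R.left) (below R.right) := disjoint_left.2 fun P hl hr =>
    let ⟨_, hx⟩ := P.nonempty_toSet
    disjoint_left.1 R.disjoint_left_right (hl hx) (hr hx)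
  have hR : Disjoint (below R.left ∪ below R.right) {R} :=
    disjoint_singleton_right.2 fun h => h.elim R.not_subset_left R.not_subset_right
  calc demandBelow d R.left + demandBelow d R.right + d R
      = ∑' P : ↑(below R.left ∪ below R.right ∪ {R}), d P := by
        rw [ENNReal.summable.tsum_union_disjoint hR ENNReal.summable,
          ENNReal.summable.tsum_union_disjoint hlr ENNReal.summable, tsum_singleton]
        rfl
    _ ≤ demandBelow d R := ENNReal.tsum_mono_subtype d <| union_subset
        (union_subset (fun _ hP => hP.trans R.left_subset) fun _ hP => hP.trans R.right_subset)
        (singleton_subset_iff.2 (show R.toSet ⊆ R.toSet from subset_rfl))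

theorem demandBelow_indicator (S : Set DyadicInterval) (f : DyadicInterval → ℝ≥0∞)
    (R : DyadicInterval) :
    demandBelow (S.indicator f) R =
      ∑' P : {P : DyadicInterval // P ∈ S ∧ P.toSet ⊆ R.toSet}, f P := by
  change ∑' P : ↑{P : DyadicInterval | P.toSet ⊆ R.toSet}, S.indicator f P =
    ∑' P : ↑{P : DyadicInterval | P ∈ S ∧ P.toSet ⊆ R.toSet}, f P
  rw [tsum_subtype, tsum_subtype, indicator_indicator, inter_comm]
  rfl

def fillStep (W : DyadicInterval → Set ℝ) (R : DyadicInterval) : Set ℝ :=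
  (W R.left ∪ W R.right) ∪ leftmostPart (R.toSet \ (W R.left ∪ W R.right)) (d R)

/-- `fill d n R` is the part of `R` claimed by the intervals at most `n - 1` levels below `R`
when only these are served. -/
def fill (n : ℕ) : DyadicInterval → Set ℝ := (fillStep d)^[n] ⊥

theorem fill_succ (n : ℕ) : fill d (n + 1) = fillStep d (fill d n) :=
  Function.iterate_succ_apply' _ _ _

theorem monotone_fill : Monotone (fill d) :=
  have hstep : Monotone (fillStep d) := fun _ _ h R =>
    union_leftmostPart_subset (union_subset_union (h R.left) (h R.right)) _
  hstep.monotone_iterate_of_le_map bot_le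

theorem fill_subset (n : ℕ) (R : DyadicInterval) : fill d n R ⊆ R.toSet := by
  induction n generalizing R with
  | zero => exact empty_subset _
  | succ n ih =>
    rw [fill_succ]
    exact union_subset
      (union_subset ((ih _).trans R.left_subset) ((ih _).trans R.right_subset))
      ((leftmostPart_subset _ _).trans sdiff_subset)

theorem measurableSet_fill (n : ℕ) (R : DyadicInterval) : MeasurableSet (fill d n R) := by
  induction n generalizing R with
  | zero => exact MeasurableSet.empty
  | succ n ih =>
    rw [fill_succ]
    exact ((ih _).union (ih _)).union <|
      measurableSet_leftmostPart (R.measurableSet_toSet.diff ((ih _).union (ih _))) _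

theorem volume_fill_le (n : ℕ) (R : DyadicInterval) : volume (fill d n R) ≤ demandBelow d R := by
  induction n generalizing R with
  | zero => simp [fill]
  | succ n ih =>
    calc volume (fill d (n + 1) R)
        ≤ volume (fill d n R.left) + volume (fill d n R.right) + d R := by
          rw [fill_succ]
          exact (measure_union_le _ _).trans
            (add_le_add (measure_union_le _ _) (volume_leftmostPart_le _ _))
      _ ≤ demandBelow d R.left + demandBelow d R.right + d R := by gcongr <;> exact ih _
      _ ≤ demandBelow d R := demandBelow_left_add_right_add_le d R

variable {d} in
theorem add_le_volume_fill_succ (hd : ∀ R, demandBelow d R ≤ volume R.toSet) (n : ℕ)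
    (R : DyadicInterval) :
    volume (fill d n R.left ∪ fill d n R.right) + d R ≤ volume (fill d (n + 1) R) := by
  set V := fill d n R.left ∪ fill d n R.right
  have hVR : V ⊆ R.toSet :=
    union_subset ((fill_subset d n _).trans R.left_subset)
      ((fill_subset d n _).trans R.right_subset)
  have hVfin : volume V ≠ ∞ := ne_top_of_le_ne_top R.volume_toSet_ne_top (measure_mono hVR)
  have hroom : d R ≤ volume (R.toSet \ V) := by
    refine le_trans (ENNReal.le_sub_of_add_le_left hVfin ?_) le_measure_sdiff
    calc volume V + d R ≤ volume (fill d n R.left) + volume (fill d n R.right) + d R := by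
          gcongr; exact measure_union_le _ _
      _ ≤ demandBelow d R.left + demandBelow d R.right + d R := by
          gcongr <;> exact volume_fill_le d n _
      _ ≤ volume R.toSet := (demandBelow_left_add_right_add_le d R).trans (hd R)
  calc volume V + d R
      ≤ volume V + volume (leftmostPart (R.toSet \ V) (d R)) := by
        gcongr; exact le_volume_leftmostPart (R.bddBelow_toSet.mono sdiff_subset) hroom
    _ = volume (fill d (n + 1) R) := by
        rw [fill_succ]
        exact (measure_union (disjoint_sdiff_right.mono_right (leftmostPart_subset _ _))
          (measurableSet_leftmostPart (R.measurableSet_toSet.diff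
            ((measurableSet_fill d n _).union (measurableSet_fill d n _))) _)).symm

def filled (R : DyadicInterval) : Set ℝ := ⋃ n, fill d n R

theorem filled_subset (R : DyadicInterval) : filled d R ⊆ R.toSet :=
  iUnion_subset fun n => fill_subset d n R

theorem measurableSet_filled (R : DyadicInterval) : MeasurableSet (filled d R) :=
  .iUnion fun n => measurableSet_fill d n R

theorem fill_subset_filled (n : ℕ) (R : DyadicInterval) : fill d n R ⊆ filled d R :=
  subset_iUnion (fun m => fill d m R) n

theorem fill_left_subset_fill_succ (n : ℕ) (R : DyadicInterval) :
    fill d n R.left ⊆ fill d (n + 1) R := by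
  rw [fill_succ]; exact subset_union_left.trans subset_union_left

theorem fill_right_subset_fill_succ (n : ℕ) (R : DyadicInterval) :
    fill d n R.right ⊆ fill d (n + 1) R := by
  rw [fill_succ]; exact subset_union_right.trans subset_union_left

theorem filled_left_subset (R : DyadicInterval) : filled d R.left ⊆ filled d R :=
  iUnion_subset fun n => (fill_left_subset_fill_succ d n R).trans (fill_subset_filled d (n + 1) R)

theorem filled_right_subset (R : DyadicInterval) : filled d R.right ⊆ filled d R :=
  iUnion_subset fun n => (fill_right_subset_fill_succ d n R).trans (fill_subset_filled d (n + 1) R)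

theorem filled_mono {P R : DyadicInterval} (h : P.toSet ⊆ R.toSet) : filled d P ⊆ filled d R := by
  obtain ⟨j, hj⟩ := Int.eq_ofNat_of_zero_le (sub_nonneg.2 (k_le_of_subset h))
  induction j generalizing R with
  | zero => rw [eq_of_subset_of_k_eq h (by omega)]
  | succ j ih =>
    have hne : P ≠ R := fun hPR => by rw [hPR] at hj; omega
    rcases subset_left_or_subset_right h hne with hl | hr
    · exact (ih hl (by simp only [left]; omega)).trans (filled_left_subset d R)
    · exact (ih hr (by simp only [right]; omega)).trans (filled_right_subset d R)

variable {d} in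
theorem volume_filled_left_union_right_add_le (hd : ∀ R, demandBelow d R ≤ volume R.toSet)
    (R : DyadicInterval) :
    volume (filled d R.left ∪ filled d R.right) + d R ≤ volume (filled d R) := by
  have hmono : Monotone fun n => fill d n R.left ∪ fill d n R.right := fun m n h =>
    union_subset_union (monotone_fill d h R.left) (monotone_fill d h R.right)
  rw [filled, filled, ← iUnion_union_distrib, hmono.measure_iUnion, ENNReal.iSup_add]
  exact iSup_le fun n =>
    (add_le_volume_fill_succ hd n R).trans (measure_mono (fill_subset_filled d _ R))

def freshPart (R : DyadicInterval) : Set ℝ := filled d R \ (filled d R.left ∪ filled d R.right)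

theorem freshPart_subset (R : DyadicInterval) : freshPart d R ⊆ R.toSet :=
  sdiff_subset.trans (filled_subset d R)

theorem measurableSet_freshPart (R : DyadicInterval) : MeasurableSet (freshPart d R) :=
  (measurableSet_filled d R).diff ((measurableSet_filled d _).union (measurableSet_filled d _))

variable {d} in
theorem le_volume_freshPart (hd : ∀ R, demandBelow d R ≤ volume R.toSet) (R : DyadicInterval) :
    d R ≤ volume (freshPart d R) := by
  have hfin : volume (filled d R.left ∪ filled d R.right) ≠ ∞ :=
    ne_top_of_le_ne_top R.volume_toSet_ne_top (measure_mono (union_subset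
      ((filled_subset d _).trans R.left_subset) ((filled_subset d _).trans R.right_subset)))
  exact (ENNReal.le_sub_of_add_le_left hfin
    (volume_filled_left_union_right_add_le hd R)).trans le_measure_sdiff

theorem disjoint_freshPart_of_subset {P R : DyadicInterval} (h : P.toSet ⊆ R.toSet) (hne : P ≠ R) :
    Disjoint (freshPart d P) (freshPart d R) := by
  refine disjoint_sdiff_right.mono_left (sdiff_subset.trans ?_)
  rcases subset_left_or_subset_right h hne with hl | hr
  · exact (filled_mono d hl).trans subset_union_left
  · exact (filled_mono d hr).trans subset_union_right

theorem pairwise_disjoint_freshPart : Pairwise (Function.onFun Disjoint (freshPart d)) := by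
  intro P R hne
  rcases subset_or_subset_or_disjoint P R with h | h | h
  · exact disjoint_freshPart_of_subset d h hne
  · exact (disjoint_freshPart_of_subset d h hne.symm).symm
  · exact h.mono (freshPart_subset d P) (freshPart_subset d R)

end DyadicInterval

open DyadicInterval

theorem isCarleson_one_div_iff {η : ℝ} (hη : 0 < η) (S : Set DyadicInterval) :
    IsCarleson (1 / η) S ↔ ∀ Q : DyadicInterval,
      ENNReal.ofReal η * ∑' P : {P : DyadicInterval // P ∈ S ∧ P.toSet ⊆ Q.toSet},
        volume P.1.toSet ≤ volume Q.toSet := by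
  simp only [IsCarleson, one_div, ENNReal.ofReal_inv_of_pos hη,
    ← ENNReal.mul_le_iff_le_inv (ENNReal.ofReal_pos.2 hη).ne' ENNReal.ofReal_ne_top]

theorem sparse_iff_carleson_general {η : ℝ} (hη₀ : 0 < η)
    (S : Set DyadicInterval) :
    IsSparse η S ↔ IsCarleson (1 / η) S := by
  rw [isCarleson_one_div_iff hη₀]
  constructor
  · rintro ⟨E, hE, hdisj⟩ Q
    calc ENNReal.ofReal η * ∑' P : {P : DyadicInterval // P ∈ S ∧ P.toSet ⊆ Q.toSet},
          volume P.1.toSet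
        = ∑' P : {P : DyadicInterval // P ∈ S ∧ P.toSet ⊆ Q.toSet},
            ENNReal.ofReal η * volume P.1.toSet := ENNReal.tsum_mul_left.symm
      _ ≤ ∑' P : {P : DyadicInterval // P ∈ S ∧ P.toSet ⊆ Q.toSet}, volume (E P) :=
          ENNReal.tsum_le_tsum fun P => (hE P.1 P.2.1).2.2
      _ = volume (⋃ P : {P : DyadicInterval // P ∈ S ∧ P.toSet ⊆ Q.toSet}, E P) :=
          (measure_iUnion (fun P P' h => hdisj P.2.1 P'.2.1 (Subtype.coe_ne_coe.2 h))
            fun P => (hE P.1 P.2.1).1).symm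
      _ ≤ volume Q.toSet := measure_mono (iUnion_subset fun P => (hE P.1 P.2.1).2.1.trans P.2.2)
  · intro hC
    set d := S.indicator fun P => ENNReal.ofReal η * volume P.toSet
    have hd : ∀ R, demandBelow d R ≤ volume R.toSet := fun R => by
      rw [demandBelow_indicator, ENNReal.tsum_mul_left]; exact hC R
    refine ⟨freshPart d, fun Q hQ => ⟨measurableSet_freshPart d Q, freshPart_subset d Q, ?_⟩,
      fun Q _ Q' _ hne => pairwise_disjoint_freshPart d hne⟩
    simpa [d, hQ] using le_volume_freshPart hd Q

/-- A collection of dyadic intervals is `η`-sparse iff it is `1/η`-Carleson. -/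
theorem sparse_iff_carleson {η : ℝ} (hη₀ : 0 < η) (hη₁ : η < 1)
    (S : Set DyadicInterval) :
    IsSparse η S ↔ IsCarleson (1 / η) S :=
  sparse_iff_carleson_general hη₀ S
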